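/- arXiv:2305.09126 — 2 statements merged into one kernel-verified Lean document; each statement's English description precedes it below -/
import Mathlib

section
/- Under ignorability and positivity, E[(1−Z)·Y / (1−e(X))] = E[Y₀], and hence E[Z·Y/e(X)] − E[(1−Z)·Y/(1−e(X))] equals the average causal effect τ = E[Y₁] − E[Y₀]. -/
open MeasureTheory ProbabilityTheory
open scoped ProbabilityTheory

/-!
Ignorability makes conditioning on the potential outcomes useless for predicting the binary
treatment once `X` is known: `E[Z | X, Y₀, Y₁] = E[Z | X] = e(X)`. Since `Z · Y = Z · Y₁` and
`Y₁ / e(X)` is `(X, Y₀, Y₁)`-measurable, the tower property gives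
`E[Z Y / e(X)] = E[E[Z | X, Y₀, Y₁] · Y₁ / e(X)] = E[Y₁]`. The control arm is the same argument
for the treatment `1 - Z`, whose propensity score is `1 - e(X)`.
-/

theorem setIntegral_eq_of_isPiSystem {α E : Type*} [NormedAddCommGroup E] [NormedSpace ℝ E]
    {m m0 : MeasurableSpace α} {μ : Measure α} {s : Set (Set α)} {f g : α → E}
    (hm : m ≤ m0) (h_eq : m = MeasurableSpace.generateFrom s) (h_inter : IsPiSystem s)
    (hf : Integrable f μ) (hg : Integrable g μ)
    (basic : ∀ t ∈ s, ∫ x in t, f x ∂μ = ∫ x in t, g x ∂μ)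
    (h_univ : ∫ x, f x ∂μ = ∫ x, g x ∂μ) {t : Set α} (ht : MeasurableSet[m] t) :
    ∫ x in t, f x ∂μ = ∫ x in t, g x ∂μ := by
  induction t, ht using MeasurableSpace.induction_on_inter h_eq h_inter with
  | empty => simp
  | basic t ht => exact basic t ht
  | compl t ht h => rw [setIntegral_compl (hm t ht) hf, setIntegral_compl (hm t ht) hg, h, h_univ]
  | iUnion u hdisj hu h =>
    rw [integral_iUnion (fun i => hm _ (hu i)) hdisj hf.integrableOn,
      integral_iUnion (fun i => hm _ (hu i)) hdisj hg.integrableOn]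
    exact tsum_congr h

theorem MeasurableSpace.sup_eq_generateFrom_image2_inter {α : Type*}
    (m₁ m₂ : MeasurableSpace α) :
    m₁ ⊔ m₂ =
      generateFrom (Set.image2 (· ∩ ·) {s | MeasurableSet[m₁] s} {t | MeasurableSet[m₂] t}) := by
  refine le_antisymm (sup_le (fun s hs => ?_) (fun t ht => ?_)) (generateFrom_le ?_)
  · exact measurableSet_generateFrom ⟨s, hs, Set.univ, .univ, Set.inter_univ s⟩
  · exact measurableSet_generateFrom ⟨Set.univ, .univ, t, ht, Set.univ_inter t⟩
  · rintro _ ⟨s, hs, t, ht, rfl⟩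
    exact (le_sup_left (b := m₂) s hs).inter (le_sup_right (a := m₁) t ht)

theorem isPiSystem_image2_inter {α : Type*} {S T : Set (Set α)} (hS : IsPiSystem S)
    (hT : IsPiSystem T) : IsPiSystem (Set.image2 (· ∩ ·) S T) := by
  rintro _ ⟨s₁, hs₁, t₁, ht₁, rfl⟩ _ ⟨s₂, hs₂, t₂, ht₂, rfl⟩ hne
  rw [Set.inter_inter_inter_comm] at hne ⊢
  exact ⟨_, hS _ hs₁ _ hs₂ hne.left, _, hT _ ht₁ _ ht₂ hne.right, rfl⟩

theorem indicator_preimage_one_eq_self {α : Type*} {f : α → ℝ} (hf : ∀ x, f x = 0 ∨ f x = 1) :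
    (f ⁻¹' {1}).indicator (fun _ => (1 : ℝ)) = f := by
  funext x
  rcases hf x with h | h <;> simp [h]

theorem integrable_of_forall_eq_zero_or_eq_one {α : Type*} [MeasurableSpace α] {μ : Measure α}
    [IsFiniteMeasure μ] {f : α → ℝ} (hf_meas : Measurable f) (hf : ∀ x, f x = 0 ∨ f x = 1) :
    Integrable f μ :=
  .of_bound hf_meas.aestronglyMeasurable 1 <| .of_forall fun x => by
    rcases hf x with h | h <;> simp [h]

theorem condExp_one_sub {α : Type*} {m m0 : MeasurableSpace α} {μ : Measure α}
    [IsFiniteMeasure μ] {f : α → ℝ} (hm : m ≤ m0) (hf : Integrable f μ) :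
    μ[fun x => 1 - f x | m] =ᵐ[μ] fun x => 1 - μ[f | m] x := by
  filter_upwards [condExp_sub (integrable_const 1) hf m] with x hx
  rw [show (fun x => 1 - f x) = (fun _ => (1 : ℝ)) - f from rfl, hx, Pi.sub_apply,
    condExp_const hm]

section CondIndep

variable {Ω γ : Type*} {m' mΩ : MeasurableSpace Ω} [StandardBorelSpace Ω] {hm' : m' ≤ mΩ}
  {μ : Measure Ω} [IsFiniteMeasure μ] {mγ : MeasurableSpace γ} {W : Ω → γ} {Z : Ω → ℝ}

theorem condExp_indicator_preimage_eq_mul (hW : Measurable W) (hZ : Measurable Z)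
    (hbin : ∀ ω, Z ω = 0 ∨ Z ω = 1) (hindep : CondIndepFun m' hm' W Z μ)
    {B : Set γ} (hB : MeasurableSet B) :
    μ[(W ⁻¹' B).indicator Z | m'] =ᵐ[μ] μ⟦W ⁻¹' B | m'⟧ * μ[Z | m'] := by
  have h := (condIndepFun_iff_condExp_inter_preimage_eq_mul hW hZ).1 hindep B {1} hB
    (measurableSet_singleton 1)
  rwa [← Set.indicator_indicator, indicator_preimage_one_eq_self hbin] at h

theorem setIntegral_inter_preimage_condExp (hW : Measurable W) (hZ : Measurable Z)
    (hbin : ∀ ω, Z ω = 0 ∨ Z ω = 1) (hindep : CondIndepFun m' hm' W Z μ)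
    {A : Set Ω} (hA : MeasurableSet[m'] A) {B : Set γ} (hB : MeasurableSet B) :
    ∫ ω in A ∩ W ⁻¹' B, μ[Z | m'] ω ∂μ = ∫ ω in A ∩ W ⁻¹' B, Z ω ∂μ := by
  have hWB : MeasurableSet (W ⁻¹' B) := hW hB
  have hZint := integrable_of_forall_eq_zero_or_eq_one (μ := μ) hZ hbin
  have hsplit :
      (W ⁻¹' B).indicator (μ[Z | m']) = (W ⁻¹' B).indicator (fun _ => 1) * μ[Z | m'] := by
    funext ω
    by_cases hω : ω ∈ W ⁻¹' B <;> simp [hω]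
  have hpull : μ[(W ⁻¹' B).indicator (μ[Z | m']) | m'] =ᵐ[μ] μ⟦W ⁻¹' B | m'⟧ * μ[Z | m'] := by
    rw [hsplit]
    exact condExp_mul_of_stronglyMeasurable_right stronglyMeasurable_condExp
      (hsplit ▸ integrable_condExp.indicator hWB) ((integrable_const 1).indicator hWB)
  calc ∫ ω in A ∩ W ⁻¹' B, μ[Z | m'] ω ∂μ
      = ∫ ω in A, (W ⁻¹' B).indicator (μ[Z | m']) ω ∂μ := (setIntegral_indicator hWB).symm
    _ = ∫ ω in A, μ[(W ⁻¹' B).indicator (μ[Z | m']) | m'] ω ∂μ :=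
        (setIntegral_condExp hm' (integrable_condExp.indicator hWB) hA).symm
    _ = ∫ ω in A, μ[(W ⁻¹' B).indicator Z | m'] ω ∂μ :=
        setIntegral_congr_ae (hm' _ hA) <|
          (hpull.trans (condExp_indicator_preimage_eq_mul hW hZ hbin hindep hB).symm).mono
            fun _ h _ => h
    _ = ∫ ω in A, (W ⁻¹' B).indicator Z ω ∂μ := setIntegral_condExp hm' (hZint.indicator hWB) hA
    _ = ∫ ω in A ∩ W ⁻¹' B, Z ω ∂μ := setIntegral_indicator hWB

theorem condExp_sup_comap_eq_of_condIndepFun (hW : Measurable W) (hZ : Measurable Z)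
    (hbin : ∀ ω, Z ω = 0 ∨ Z ω = 1) (hindep : CondIndepFun m' hm' W Z μ) :
    μ[Z | m' ⊔ mγ.comap W] =ᵐ[μ] μ[Z | m'] := by
  have hM : m' ⊔ mγ.comap W ≤ mΩ := sup_le hm' hW.comap_le
  have hZint := integrable_of_forall_eq_zero_or_eq_one (μ := μ) hZ hbin
  refine (ae_eq_condExp_of_forall_setIntegral_eq hM hZint
    (fun _ _ _ => integrable_condExp.integrableOn) (fun t ht _ => ?_)
    (StronglyMeasurable.aestronglyMeasurable (stronglyMeasurable_condExp.mono le_sup_left))).symm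
  refine setIntegral_eq_of_isPiSystem hM (MeasurableSpace.sup_eq_generateFrom_image2_inter _ _)
    (isPiSystem_image2_inter (@MeasurableSpace.isPiSystem_measurableSet _ m')
      (@MeasurableSpace.isPiSystem_measurableSet _ (mγ.comap W)))
    integrable_condExp hZint ?_ (integral_condExp hm') ht
  rintro _ ⟨A, hA, _, ⟨B, hB, rfl⟩, rfl⟩
  exact setIntegral_inter_preimage_condExp hW hZ hbin hindep hA hB

theorem integral_mul_div_propensity_eq {V e : Ω → ℝ} (hW : Measurable W)
    (hZ : Measurable Z) (hbin : ∀ ω, Z ω = 0 ∨ Z ω = 1) (hindep : CondIndepFun m' hm' W Z μ)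
    (hV : Measurable[mγ.comap W] V) (he : e =ᵐ[μ] μ[Z | m']) (he_ne : ∀ᵐ ω ∂μ, e ω ≠ 0)
    (hint : Integrable (fun ω => Z ω * V ω / e ω) μ) :
    ∫ ω, Z ω * V ω / e ω ∂μ = ∫ ω, V ω ∂μ := by
  have hZint : Integrable Z μ := integrable_of_forall_eq_zero_or_eq_one hZ hbin
  set 𝒢 := m' ⊔ mγ.comap W
  have h𝒢 : 𝒢 ≤ mΩ := sup_le hm' hW.comap_le
  set g : Ω → ℝ := fun ω => V ω / μ[Z | m'] ω
  have hcond : Measurable[𝒢] (μ[Z | m']) :=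
    (stronglyMeasurable_condExp.mono (le_sup_left : m' ≤ 𝒢)).measurable
  have hg : StronglyMeasurable[𝒢] g :=
    ((hV.mono le_sup_right le_rfl).div hcond).stronglyMeasurable
  have hgZ : (fun ω => Z ω * V ω / e ω) =ᵐ[μ] g * Z := by
    filter_upwards [he] with ω hω
    simp only [g, Pi.mul_apply, hω]
    ring
  have hpull := condExp_mul_of_stronglyMeasurable_left hg (hint.congr hgZ) hZint
  calc ∫ ω, Z ω * V ω / e ω ∂μ
      = ∫ ω, (g * Z) ω ∂μ := integral_congr_ae hgZ
    _ = ∫ ω, μ[g * Z | 𝒢] ω ∂μ := (integral_condExp h𝒢).symm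
    _ = ∫ ω, g ω * μ[Z | 𝒢] ω ∂μ := integral_congr_ae hpull
    _ = ∫ ω, V ω ∂μ := integral_congr_ae <| by
        filter_upwards [condExp_sup_comap_eq_of_condIndepFun hW hZ hbin hindep, he, he_ne]
          with ω hZ𝒢 hω hω_ne
        rw [hZ𝒢]
        simp only [g, ← hω]
        exact div_mul_cancel₀ (V ω) hω_ne

end CondIndep

theorem ipw_identification_ace_general
    {Ω : Type*} {mΩ : MeasurableSpace Ω} [StandardBorelSpace Ω]
    {μ : Measure Ω} [IsProbabilityMeasure μ]
    {E : Type*} [mE : MeasurableSpace E]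
    (X : Ω → E) (Z Y0 Y1 : Ω → ℝ)
    (hZ : Measurable Z)
    (hY0 : Measurable Y0) (hY1 : Measurable Y1)
    (hbin : ∀ ω, Z ω = 0 ∨ Z ω = 1)
    (hmX : MeasurableSpace.comap X mE ≤ mΩ)
    (hignore : CondIndepFun (MeasurableSpace.comap X mE) hmX
        (fun ω => (Y0 ω, Y1 ω)) Z μ)
    (Y : Ω → ℝ) (hY : Y = fun ω => Z ω * Y1 ω + (1 - Z ω) * Y0 ω)
    (e : Ω → ℝ)
    (he : e =ᵐ[μ] μ[(fun ω => if Z ω = 1 then (1 : ℝ) else 0) |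
        MeasurableSpace.comap X mE])
    (hpos : ∀ᵐ ω ∂μ, 0 < e ω ∧ e ω < 1)
    (hintT : Integrable (fun ω => Z ω * Y ω / e ω) μ)
    (hintC : Integrable (fun ω => (1 - Z ω) * Y ω / (1 - e ω)) μ) :
    ∫ ω, (1 - Z ω) * Y ω / (1 - e ω) ∂μ = ∫ ω, Y0 ω ∂μ ∧
    ∫ ω, Z ω * Y ω / e ω ∂μ - ∫ ω, (1 - Z ω) * Y ω / (1 - e ω) ∂μ =
      ∫ ω, Y1 ω ∂μ - ∫ ω, Y0 ω ∂μ := by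
  have hZ_eq : (fun ω => if Z ω = 1 then (1 : ℝ) else 0) = Z := by
    funext ω; rcases hbin ω with h | h <;> simp [h]
  rw [hZ_eq] at he
  have hW := hY0.prodMk hY1
  have hbin' : ∀ ω, 1 - Z ω = 0 ∨ 1 - Z ω = 1 := fun ω => by rcases hbin ω with h | h <;> simp [h]
  have he' : (fun ω => 1 - e ω) =ᵐ[μ] μ[fun ω => 1 - Z ω | MeasurableSpace.comap X mE] := by
    filter_upwards [he, condExp_one_sub hmX (integrable_of_forall_eq_zero_or_eq_one hZ hbin)]
      with ω hω h1
    rw [h1, hω]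
  have hYT : (fun ω => Z ω * Y ω / e ω) = fun ω => Z ω * Y1 ω / e ω := by
    funext ω; rcases hbin ω with h | h <;> simp [hY, h]
  have hYC :
      (fun ω => (1 - Z ω) * Y ω / (1 - e ω)) = fun ω => (1 - Z ω) * Y0 ω / (1 - e ω) := by
    funext ω; rcases hbin ω with h | h <;> simp [hY, h]
  have htreated : ∫ ω, Z ω * Y ω / e ω ∂μ = ∫ ω, Y1 ω ∂μ := by
    rw [hYT] at hintT ⊢
    exact integral_mul_div_propensity_eq hW hZ hbin hignore
      (measurable_snd.comp (comap_measurable _)) he (hpos.mono fun _ h => h.1.ne') hintT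
  have hcontrol : ∫ ω, (1 - Z ω) * Y ω / (1 - e ω) ∂μ = ∫ ω, Y0 ω ∂μ := by
    rw [hYC] at hintC ⊢
    exact integral_mul_div_propensity_eq hW (measurable_const.sub hZ) hbin'
      (hignore.comp measurable_id (measurable_const.sub measurable_id))
      (measurable_fst.comp (comap_measurable _)) he' (hpos.mono fun _ h => (sub_pos.2 h.2).ne')
      hintC
  exact ⟨hcontrol, by rw [htreated, hcontrol]⟩

/-- Under ignorability and positivity, `E[(1-Z)·Y / (1-e(X))] = E[Y₀]`, and hence
`E[Z·Y/e(X)] - E[(1-Z)·Y/(1-e(X))] = τ = E[Y₁] - E[Y₀]`. -/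
theorem ipw_identification_ace
    {Ω : Type*} {mΩ : MeasurableSpace Ω} [StandardBorelSpace Ω]
    {μ : Measure Ω} [IsProbabilityMeasure μ]
    {E : Type*} [mE : MeasurableSpace E]
    (X : Ω → E) (Z Y0 Y1 : Ω → ℝ)
    (hX : Measurable X) (hZ : Measurable Z)
    (hY0 : Measurable Y0) (hY1 : Measurable Y1)
    (hbin : ∀ ω, Z ω = 0 ∨ Z ω = 1)
    (hmX : MeasurableSpace.comap X mE ≤ mΩ)
    (hignore : CondIndepFun (MeasurableSpace.comap X mE) hmX
        (fun ω => (Y0 ω, Y1 ω)) Z μ)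
    (Y : Ω → ℝ) (hY : Y = fun ω => Z ω * Y1 ω + (1 - Z ω) * Y0 ω)
    (e : Ω → ℝ)
    (he : e =ᵐ[μ] μ[(fun ω => if Z ω = 1 then (1 : ℝ) else 0) |
        MeasurableSpace.comap X mE])
    (hpos : ∀ᵐ ω ∂μ, 0 < e ω ∧ e ω < 1)
    (hint0 : Integrable Y0 μ) (hint1 : Integrable Y1 μ)
    (hintT : Integrable (fun ω => Z ω * Y ω / e ω) μ)
    (hintC : Integrable (fun ω => (1 - Z ω) * Y ω / (1 - e ω)) μ) :
    ∫ ω, (1 - Z ω) * Y ω / (1 - e ω) ∂μ = ∫ ω, Y0 ω ∂μ ∧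
    ∫ ω, Z ω * Y ω / e ω ∂μ - ∫ ω, (1 - Z ω) * Y ω / (1 - e ω) ∂μ =
      ∫ ω, Y1 ω ∂μ - ∫ ω, Y0 ω ∂μ :=
  ipw_identification_ace_general (mE := mE) X Z Y0 Y1 hZ hY0 hY1 hbin hmX hignore Y hY e he hpos
    hintT hintC
end

section
/- Let m₁(X) = E[Y₁ | X]. Under ignorability, for any measurable function ẽ of X bounded away from 0, E[ m₁(X) + Z·(Y − m₁(X)) / ẽ(X) ] = E[Y₁]; that is, the augmented estimator is unbiased when the outcome regression model is correct even if the propensity model ẽ is misspecified. -/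
/-!
Write `A = {Z = 1}`, `φ = 1 / ẽ(X)` and `w = P(A | X)`. As `Z` is binary, the correction term is
`φ · 1_A · (Y₁ - m₁)`, and `φ` is `σ(X)`-measurable, so its mean is that of
`φ · E[1_A (Y₁ - m₁) | X]`. Conditional independence of `(Y₀, Y₁)` and `Z` given `X` turns
`E[1_A Y₁ | X]` into `w · m₁`, which is also `E[1_A m₁ | X]`; hence the correction has mean zero
whatever `ẽ` is, and `E[m₁(X)] = E[Y₁]`.
-/

open MeasureTheory ProbabilityTheory
open scoped ProbabilityTheory ENNReal NNReal

lemma Set.indicator_one_mul_eq_indicator {α M₀ : Type*} [MulZeroOneClass M₀] (s : Set α)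
    (g : α → M₀) : s.indicator (fun _ => (1 : M₀)) * g = s.indicator g := by
  ext a; by_cases h : a ∈ s <;> simp [h]

namespace ProbabilityTheory

variable {Ω : Type*} {m' m₁ m₂ mΩ : MeasurableSpace Ω} {μ : Measure Ω} {A s T : Set Ω}

lemma ae_norm_condExp_indicator_le_one (A : Set Ω) : ∀ᵐ ω ∂μ, ‖(μ⟦A|m'⟧) ω‖ ≤ 1 :=
  ae_bdd_norm_condExp_of_ae_bdd_norm <| ae_of_all _ fun ω => by
    by_cases h : ω ∈ A <;> simp [h]

lemma condExp_indicator_nonneg (A : Set Ω) : 0 ≤ᵐ[μ] μ⟦A|m'⟧ :=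
  condExp_nonneg <| ae_of_all _ fun _ => Set.indicator_nonneg (fun _ _ => zero_le_one) _

variable [StandardBorelSpace Ω] [IsFiniteMeasure μ]

namespace CondIndep

variable (hm' : m' ≤ mΩ)

lemma measureReal_inter_eq_setIntegral_condExp (hm₁ : m₁ ≤ mΩ) (hm₂ : m₂ ≤ mΩ)
    (h : CondIndep m' m₁ m₂ hm' μ)
    (hs : MeasurableSet[m'] s) (hT : MeasurableSet[m₁] T) (hA : MeasurableSet[m₂] A) :
    μ.real (s ∩ (T ∩ A)) = ∫ ω in s ∩ T, (μ⟦A|m'⟧) ω ∂μ := by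
  have hTm : MeasurableSet T := hm₁ T hT
  have hTA : MeasurableSet (T ∩ A) := hTm.inter (hm₂ A hA)
  have hpull : μ[T.indicator (fun _ => (1 : ℝ)) * μ⟦A|m'⟧|m'] =ᵐ[μ] μ⟦T|m'⟧ * μ⟦A|m'⟧ :=
    condExp_mul_of_stronglyMeasurable_right stronglyMeasurable_condExp
      (by rw [Set.indicator_one_mul_eq_indicator]; exact integrable_condExp.indicator hTm)
      ((integrable_const _).indicator hTm)
  calc μ.real (s ∩ (T ∩ A)) = ∫ ω in s, (μ⟦T ∩ A|m'⟧) ω ∂μ := by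
        rw [setIntegral_condExp hm' ((integrable_const _).indicator hTA) hs,
          setIntegral_indicator hTA, setIntegral_const, smul_eq_mul, mul_one]
    _ = ∫ ω in s, (μ[T.indicator (fun _ => (1 : ℝ)) * μ⟦A|m'⟧|m']) ω ∂μ :=
        setIntegral_congr_ae (hm' s hs) <|
          (((condIndep_iff m' m₁ m₂ hm' hm₁ hm₂ μ).1 h T A hT hA).trans hpull.symm).mono
            fun _ h _ => h
    _ = ∫ ω in s ∩ T, (μ⟦A|m'⟧) ω ∂μ := by
        rw [setIntegral_condExp hm' (integrable_condExp.indicator hTm |>.congr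
          (Set.indicator_one_mul_eq_indicator T _).symm.eventuallyEq) hs,
          Set.indicator_one_mul_eq_indicator, setIntegral_indicator hTm]

/-- On `m₁`, the measures `1_{s ∩ A} μ` and `P(A | m') 1_s μ` agree set by set, hence they
integrate every `m₁`-measurable function alike. -/
lemma setIntegral_inter_eq_setIntegral_condExp_mul (hm₁ : m₁ ≤ mΩ) (hm₂ : m₂ ≤ mΩ)
    (h : CondIndep m' m₁ m₂ hm' μ)
    (hs : MeasurableSet[m'] s) (hA : MeasurableSet[m₂] A) {f : Ω → ℝ}
    (hf : StronglyMeasurable[m₁] f) :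
    ∫ ω in s ∩ A, f ω ∂μ = ∫ ω in s, (μ⟦A|m'⟧) ω * f ω ∂μ := by
  set w : Ω → ℝ≥0 := fun ω => ((μ⟦A|m'⟧) ω).toNNReal
  have hw : Measurable w := (stronglyMeasurable_condExp.mono hm').measurable.real_toNNReal
  have hν : (μ.restrict (s ∩ A)).trim hm₁
      = ((μ.restrict s).withDensity fun ω => (w ω : ℝ≥0∞)).trim hm₁ := by
    refine @Measure.ext _ m₁ _ _ fun T hT => ?_
    rw [trim_measurableSet_eq hm₁ hT, trim_measurableSet_eq hm₁ hT,
      Measure.restrict_apply (hm₁ T hT), withDensity_apply _ (hm₁ T hT),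
      Measure.restrict_restrict (hm₁ T hT), Set.inter_comm T (s ∩ A), Set.inter_comm T s,
      Set.inter_right_comm, Set.inter_assoc, ← ofReal_measureReal,
      h.measureReal_inter_eq_setIntegral_condExp hm' hm₁ hm₂ hs hT hA,
      ofReal_integral_eq_lintegral_ofReal integrable_condExp.integrableOn
        (ae_restrict_of_ae (condExp_indicator_nonneg A))]
    rfl
  calc ∫ ω in s ∩ A, f ω ∂μ = ∫ ω, f ω ∂(μ.restrict (s ∩ A)).trim hm₁ := integral_trim hm₁ hf
    _ = ∫ ω in s, w ω • f ω ∂μ := by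
        rw [hν, ← integral_trim hm₁ hf, integral_withDensity_eq_integral_smul hw]
    _ = ∫ ω in s, (μ⟦A|m'⟧) ω * f ω ∂μ :=
        integral_congr_ae <| ae_restrict_of_ae <|
          (condExp_indicator_nonneg (m' := m') A).mono fun ω h => by
            simp [w, NNReal.smul_def, Real.coe_toNNReal _ h]

lemma condExp_indicator_eq_mul (hm₁ : m₁ ≤ mΩ) (hm₂ : m₂ ≤ mΩ)
    (h : CondIndep m' m₁ m₂ hm' μ) (hA : MeasurableSet[m₂] A)
    {f : Ω → ℝ} (hf : StronglyMeasurable[m₁] f) (hfi : Integrable f μ) :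
    μ[A.indicator f|m'] =ᵐ[μ] μ⟦A|m'⟧ * μ[f|m'] := by
  have hwf : Integrable (μ⟦A|m'⟧ * f) μ :=
    hfi.bdd_mul (stronglyMeasurable_condExp.mono hm').aestronglyMeasurable
      (ae_norm_condExp_indicator_le_one A)
  have hpull : μ[μ⟦A|m'⟧ * f|m'] =ᵐ[μ] μ⟦A|m'⟧ * μ[f|m'] :=
    condExp_stronglyMeasurable_mul_of_bound hm' stronglyMeasurable_condExp hfi 1
      (ae_norm_condExp_indicator_le_one A)
  refine (ae_eq_condExp_of_forall_setIntegral_eq hm' (hfi.indicator (hm₂ A hA))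
    (fun s _ _ => (integrable_condExp.congr hpull).integrableOn) (fun s hs _ => ?_)
    (stronglyMeasurable_condExp.mul stronglyMeasurable_condExp).aestronglyMeasurable).symm
  calc ∫ ω in s, (μ⟦A|m'⟧ * μ[f|m']) ω ∂μ = ∫ ω in s, (μ[μ⟦A|m'⟧ * f|m']) ω ∂μ :=
        setIntegral_congr_ae (hm' s hs) (hpull.mono fun _ h _ => h.symm)
    _ = ∫ ω in s ∩ A, f ω ∂μ := by
        rw [setIntegral_condExp hm' hwf hs]
        exact (h.setIntegral_inter_eq_setIntegral_condExp_mul hm' hm₁ hm₂ hs hA hf).symm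
    _ = ∫ ω in s, A.indicator f ω ∂μ := (setIntegral_indicator (hm₂ A hA)).symm

lemma condExp_indicator_sub_condExp (hm₁ : m₁ ≤ mΩ) (hm₂ : m₂ ≤ mΩ)
    (h : CondIndep m' m₁ m₂ hm' μ) (hA : MeasurableSet[m₂] A)
    {f : Ω → ℝ} (hf : StronglyMeasurable[m₁] f) (hfi : Integrable f μ) :
    μ[A.indicator (f - μ[f|m'])|m'] =ᵐ[μ] 0 := by
  have hAm : MeasurableSet A := hm₂ A hA
  have hpull : μ[A.indicator (μ[f|m'])|m'] =ᵐ[μ] μ⟦A|m'⟧ * μ[f|m'] := by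
    rw [← Set.indicator_one_mul_eq_indicator]
    exact condExp_mul_of_stronglyMeasurable_right stronglyMeasurable_condExp
      (by rw [Set.indicator_one_mul_eq_indicator]; exact integrable_condExp.indicator hAm)
      ((integrable_const _).indicator hAm)
  rw [Set.indicator_sub']
  filter_upwards [condExp_sub (m := m') (hfi.indicator hAm) (integrable_condExp.indicator hAm),
    h.condExp_indicator_eq_mul hm' hm₁ hm₂ hA hf hfi, hpull] with ω hsub h₁ h₂
  rw [hsub, Pi.sub_apply, h₁, h₂, sub_self, Pi.zero_apply]

lemma integral_mul_indicator_sub_eq_zero (hm₁ : m₁ ≤ mΩ) (hm₂ : m₂ ≤ mΩ)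
    (h : CondIndep m' m₁ m₂ hm' μ) (hA : MeasurableSet[m₂] A) {f g φ : Ω → ℝ}
    (hf : StronglyMeasurable[m₁] f)
    (hfi : Integrable f μ) (hg : g =ᵐ[μ] μ[f|m']) (hφ : StronglyMeasurable[m'] φ)
    (hint : Integrable (φ * A.indicator (f - g)) μ) :
    ∫ ω, (φ * A.indicator (f - g)) ω ∂μ = 0 := by
  have hAm : MeasurableSet A := hm₂ A hA
  have hgf : A.indicator (f - g) =ᵐ[μ] A.indicator (f - μ[f|m']) :=
    hg.mono fun ω hω => by simp only [Set.indicator, Pi.sub_apply, hω]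
  rw [← integral_condExp hm']
  refine integral_eq_zero_of_ae ?_
  filter_upwards [condExp_mul_of_stronglyMeasurable_left hφ hint
      ((hfi.sub (integrable_condExp.congr hg.symm)).indicator hAm),
    condExp_congr_ae (m := m') hgf, h.condExp_indicator_sub_condExp hm' hm₁ hm₂ hA hf hfi]
    with ω hpull hcongr hzero
  rw [hpull, Pi.mul_apply, hcongr, hzero, Pi.zero_apply, mul_zero]

lemma integral_add_mul_indicator_sub (hm₁ : m₁ ≤ mΩ) (hm₂ : m₂ ≤ mΩ)
    (h : CondIndep m' m₁ m₂ hm' μ) (hA : MeasurableSet[m₂] A) {f g φ : Ω → ℝ}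
    (hf : StronglyMeasurable[m₁] f)
    (hfi : Integrable f μ) (hg : g =ᵐ[μ] μ[f|m']) (hφ : StronglyMeasurable[m'] φ)
    (hint : Integrable (g + φ * A.indicator (f - g)) μ) :
    ∫ ω, (g + φ * A.indicator (f - g)) ω ∂μ = ∫ ω, f ω ∂μ := by
  have hgi : Integrable g μ := integrable_condExp.congr hg.symm
  have hcorr : Integrable (φ * A.indicator (f - g)) μ := by
    simpa using hint.sub hgi
  rw [integral_add' hgi hcorr,
    h.integral_mul_indicator_sub_eq_zero hm' hm₁ hm₂ hA hf hfi hg hφ hcorr, add_zero,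
    integral_congr_ae hg, integral_condExp hm']

end CondIndep

end ProbabilityTheory

theorem dr_identification_correct_or_general
    {Ω : Type*} {mΩ : MeasurableSpace Ω} [StandardBorelSpace Ω]
    {μ : Measure Ω} [IsProbabilityMeasure μ]
    {E : Type*} [mE : MeasurableSpace E]
    (X : Ω → E) (Z Y0 Y1 : Ω → ℝ)
    (hZ : Measurable Z)
    (hY0 : Measurable Y0) (hY1 : Measurable Y1)
    (hbin : ∀ ω, Z ω = 0 ∨ Z ω = 1)
    (hmX : MeasurableSpace.comap X mE ≤ mΩ)
    (hignore : CondIndepFun (MeasurableSpace.comap X mE) hmX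
        (fun ω => (Y0 ω, Y1 ω)) Z μ)
    (Y : Ω → ℝ) (hY : Y = fun ω => Z ω * Y1 ω + (1 - Z ω) * Y0 ω)
    (m1 : Ω → ℝ) (hm1 : m1 =ᵐ[μ] μ[Y1 | MeasurableSpace.comap X mE])
    (et : E → ℝ) (het : Measurable et)
    (hint1 : Integrable Y1 μ)
    (hint : Integrable (fun ω => m1 ω + Z ω * (Y ω - m1 ω) / et (X ω)) μ) :
    ∫ ω, (m1 ω + Z ω * (Y ω - m1 ω) / et (X ω)) ∂μ = ∫ ω, Y1 ω ∂μ := by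
  have hcorrection : (fun ω => m1 ω + Z ω * (Y ω - m1 ω) / et (X ω))
      = m1 + (fun ω => (et (X ω))⁻¹) * (Z ⁻¹' {1}).indicator (Y1 - m1) := by
    funext ω
    rcases hbin ω with h | h <;> simp [hY, h, div_eq_inv_mul]
  rw [hcorrection] at hint ⊢
  exact CondIndep.integral_add_mul_indicator_sub hmX (hY0.prodMk hY1).comap_le hZ.comap_le
    ((condIndepFun_iff_condIndep _ hmX _ _ μ).1 hignore) ⟨{1}, measurableSet_singleton 1, rfl⟩
    (measurable_snd.comp (comap_measurable _)).stronglyMeasurable hint1 hm1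
    (het.comp (comap_measurable X)).inv.stronglyMeasurable hint

/-- Doubly-robust identification with a correct outcome regression `m₁(X) = E[Y₁|X]`:
for any measurable `ẽ` of the covariates bounded away from zero,
`E[m₁(X) + Z(Y - m₁(X))/ẽ(X)] = E[Y₁]`. -/
theorem dr_identification_correct_or
    {Ω : Type*} {mΩ : MeasurableSpace Ω} [StandardBorelSpace Ω]
    {μ : Measure Ω} [IsProbabilityMeasure μ]
    {E : Type*} [mE : MeasurableSpace E]
    (X : Ω → E) (Z Y0 Y1 : Ω → ℝ)
    (hX : Measurable X) (hZ : Measurable Z)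
    (hY0 : Measurable Y0) (hY1 : Measurable Y1)
    (hbin : ∀ ω, Z ω = 0 ∨ Z ω = 1)
    (hmX : MeasurableSpace.comap X mE ≤ mΩ)
    (hignore : CondIndepFun (MeasurableSpace.comap X mE) hmX
        (fun ω => (Y0 ω, Y1 ω)) Z μ)
    (Y : Ω → ℝ) (hY : Y = fun ω => Z ω * Y1 ω + (1 - Z ω) * Y0 ω)
    (m1 : Ω → ℝ) (hm1 : m1 =ᵐ[μ] μ[Y1 | MeasurableSpace.comap X mE])
    (et : E → ℝ) (het : Measurable et) (c : ℝ) (hc : 0 < c)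
    (hetlb : ∀ᵐ ω ∂μ, c ≤ et (X ω))
    (hint1 : Integrable Y1 μ)
    (hint : Integrable (fun ω => m1 ω + Z ω * (Y ω - m1 ω) / et (X ω)) μ) :
    ∫ ω, (m1 ω + Z ω * (Y ω - m1 ω) / et (X ω)) ∂μ = ∫ ω, Y1 ω ∂μ :=
  dr_identification_correct_or_general (mE := mE) X Z Y0 Y1 hZ hY0 hY1 hbin hmX hignore Y hY m1 hm1
    et het hint1 hint
end
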